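/- Let y be a binary string of length n − δ. The number of binary strings of length n that contain y as a subsequence (i.e., supersequences of y of length n) is exactly Σ_{i=0}^{δ} C(n, i), independent of the particular string y. -/

import Mathlib

/-!
Split a supersequence `x` of `a :: t` according to its first letter: if `x = a :: x'` then `x'` must
contain `t`, and if `x = !a :: x'` then `x'` must contain all of `a :: t`. So the count `N(n, y)`
satisfies `N(n + 1, a :: t) = N(n, t) + N(n, a :: t)`, which is Pascal's rule summed over `i`;
induction on `n` gives `N(n, y) = ∑_{i ≤ n - |y|} C(n, i)`.
-/

open Finset

theorem Finset.card_filter_fin_succ {α : Type*} [Fintype α] (n : ℕ) (p : (Fin (n + 1) → α) → Prop)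
    [DecidablePred p] :
    #{x | p x} = ∑ b : α, #{xs : Fin n → α | p (Fin.cons b xs)} := by
  simp only [card_filter]
  rw [← Fintype.sum_equiv (Fin.consEquiv fun _ => α) (fun bx => if p (Fin.cons bx.1 bx.2) then 1 else 0)
    _ fun _ => rfl, Fintype.sum_prod_type]

theorem List.cons_sublist_cons_iff_of_ne {α : Type*} {a b : α} {l₁ l₂ : List α} (h : a ≠ b) :
    (a :: l₁).Sublist (b :: l₂) ↔ (a :: l₁).Sublist l₂ :=
  ⟨Sublist.of_cons_of_ne h, fun hl => hl.cons b⟩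

theorem Nat.sum_range_choose_succ (n m : ℕ) :
    ∑ i ∈ range m, (n + 1).choose i = ∑ i ∈ range m, n.choose i + ∑ i ∈ range (m - 1), n.choose i := by
  cases m with
  | zero => simp
  | succ m =>
    simp only [sum_range_succ' (fun i => (n + 1).choose i), sum_range_succ' (fun i => n.choose i),
      Nat.choose_succ_succ, sum_add_distrib, Nat.choose_zero_right, Nat.add_sub_cancel]
    ring

def supersequences (n : ℕ) (y : List Bool) : Finset (Fin n → Bool) :=
  {x | y.Sublist (List.ofFn x)}

theorem card_supersequences_nil (n : ℕ) : #(supersequences n []) = 2 ^ n := by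
  simp [supersequences]

theorem card_supersequences_succ_cons (n : ℕ) (a : Bool) (t : List Bool) :
    #(supersequences (n + 1) (a :: t)) = #(supersequences n t) + #(supersequences n (a :: t)) := by
  have first_eq : ∀ xs : Fin n → Bool,
      (a :: t).Sublist (List.ofFn (Fin.cons a xs)) ↔ t.Sublist (List.ofFn xs) := by
    simp
  have first_ne : ∀ xs : Fin n → Bool,
      (a :: t).Sublist (List.ofFn (Fin.cons (!a) xs)) ↔ (a :: t).Sublist (List.ofFn xs) := by
    simp only [List.ofFn_cons, List.cons_sublist_cons_iff_of_ne (Bool.not_eq_not.mpr rfl), implies_true]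
  rw [supersequences, card_filter_fin_succ, Fintype.sum_bool]
  cases a <;> simp only [Bool.not_true, Bool.not_false] at first_ne <;>
    simp only [first_eq, first_ne, supersequences, add_comm]

-- Also true for `y` longer than `n`: the truncated subtraction then makes the range empty.
theorem card_supersequences (n : ℕ) (y : List Bool) :
    #(supersequences n y) = ∑ i ∈ range (n + 1 - y.length), n.choose i := by
  induction n generalizing y with
  | zero => cases y <;> simp [supersequences]
  | succ n ih =>
    cases y with
    | nil => simp [card_supersequences_nil, Nat.sum_range_choose]
    | cons a t =>
      rw [card_supersequences_succ_cons, ih, ih, Nat.sum_range_choose_succ]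
      simp only [List.length_cons]
      congr 3 <;> omega

/-- The number of binary strings of length `n` containing a fixed string `y` of
length `n − δ` as a subsequence is `∑_{i=0}^δ C(n, i)`, independently of `y`. -/
theorem stmt12 (n δ : ℕ) (hδ : δ ≤ n) (y : List Bool) (hy : y.length = n - δ) :
    ((Finset.univ : Finset (Fin n → Bool)).filter
        (fun x => y.Sublist (List.ofFn x))).card =
      ∑ i ∈ Finset.range (δ + 1), n.choose i := by
  rw [← supersequences, card_supersequences, hy, show n + 1 - (n - δ) = δ + 1 by omega]
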